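/- If f(z) = Σ a_n zⁿ is analytic on the unit disk with Bloch norm |f(0)| + sup_{z∈𝔻}(1-|z|²)|f'(z)| ≤ 1, then for 0 ≤ r < 1, Σ_{n≥1} |a_n|² rⁿ ≤ (1-|a_0|)² log(1/(1-r)). -/

import Mathlib

/-!
Write `M = 1 - ‖a 0‖`. The Bloch hypothesis says `‖f' z‖ ≤ M / (1 - ‖z‖ ^ 2)`, so Bessel's
inequality for the Fourier series of `f'` on the circle of radius `√s` gives
`∑ ‖(n + 1) a (n + 1)‖ ^ 2 sⁿ ≤ M ^ 2 / (1 - s) ^ 2`. Integrating a power series in `s` from `0`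
divides its `n`-th coefficient by `n + 1`; comparing with `1 / (1 - s) ^ 2 = ∑ (n + 1) sⁿ`, then
with `1 / (1 - s) = ∑ sⁿ` and `log (1 / (1 - r)) = ∑ r ^ (n + 1) / (n + 1)`, two such
integrations give the claim.
-/

open Metric Complex

open Set MeasureTheory AddCircle FormalMultilinearSeries

theorem HasFPowerSeriesOnBall.hasSum_deriv {𝕜 F : Type*} [NontriviallyNormedField 𝕜]
    [NormedAddCommGroup F] [NormedSpace 𝕜 F] [CompleteSpace F]
    {p : FormalMultilinearSeries 𝕜 𝕜 F} {f : 𝕜 → F} {x : 𝕜} {r : ENNReal}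
    (hf : HasFPowerSeriesOnBall f p x r) {y : 𝕜} (hy : y ∈ eball (0 : 𝕜) r) :
    HasSum (fun n => y ^ n • (n + 1) • p.coeff (n + 1)) (deriv f (x + y)) := by
  have := (hf.fderiv.hasSum hy).mapL (ContinuousLinearMap.apply 𝕜 F 1)
  simpa [apply_eq_pow_smul_coeff] using this

theorem le_radius_ofScalars_of_summable {a : ℕ → ℂ} {R : NNReal}
    (ha : ∀ z ∈ ball (0 : ℂ) R, Summable fun n => a n * z ^ n) :
    (R : ENNReal) ≤ (ofScalars ℂ a).radius := by
  refine ENNReal.le_of_forall_nnreal_lt fun ρ hρ =>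
    (ofScalars ℂ a).le_radius_of_tendsto (l := 0) ?_
  have hmem : (ρ : ℂ) ∈ ball (0 : ℂ) R := by simpa using hρ
  simpa [ofScalars_norm] using (ha _ hmem).tendsto_atTop_zero.norm

theorem hasFPowerSeriesOnBall_ofScalars_of_hasSum {a : ℕ → ℂ} {f : ℂ → ℂ} {R : NNReal}
    (hR : 0 < R)
    (ha : ∀ z ∈ ball (0 : ℂ) R, HasSum (fun n => a n * z ^ n) (f z)) :
    HasFPowerSeriesOnBall f (ofScalars ℂ a) 0 R where
  r_le := le_radius_ofScalars_of_summable fun z hz => (ha z hz).summable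
  r_pos := by exact_mod_cast hR
  hasSum {y} hy := by
    rw [Metric.eball_coe] at hy
    simpa [ofScalars_apply_eq, mul_comm] using ha y hy

section PowerSeriesIntegral

variable {c : ℕ → ℝ} {t : ℝ}

theorem norm_mul_pow_le_of_abs_le {s : ℝ} (hs : |s| ≤ t) (n : ℕ) :
    ‖c n * s ^ n‖ ≤ ‖c n‖ * t ^ n := by
  rw [norm_mul, norm_pow, Real.norm_eq_abs s]
  gcongr

theorem continuousOn_tsum_mul_pow (hc : Summable fun n => ‖c n‖ * t ^ n) :
    ContinuousOn (fun s => ∑' n, c n * s ^ n) (Icc (-t) t) :=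
  continuousOn_tsum (fun n => (continuous_const.mul (continuous_pow n)).continuousOn) hc
    fun n _ hs => norm_mul_pow_le_of_abs_le (abs_le.2 hs) n

theorem integral_tsum_mul_pow (ht : 0 ≤ t) (hc : Summable fun n => ‖c n‖ * t ^ n) :
    ∫ s in (0)..t, ∑' n, c n * s ^ n = ∑' n, c n / (n + 1) * t ^ (n + 1) := by
  have habs : ∀ s ∈ uIoc 0 t, |s| ≤ t := fun s hs => by
    rw [uIoc_of_le ht] at hs
    exact abs_le.2 ⟨by linarith [hs.1], hs.2⟩
  have hsum := intervalIntegral.hasSum_integral_of_dominated_convergence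
    (μ := volume) (F := fun n s => c n * s ^ n) (fun n _ => ‖c n‖ * t ^ n)
    (fun n => (continuous_const.mul (continuous_pow n)).aestronglyMeasurable)
    (fun n => ae_of_all _ fun s hs => norm_mul_pow_le_of_abs_le (habs s hs) n)
    (ae_of_all _ fun _ _ => hc) intervalIntegrable_const
    (ae_of_all _ fun s hs =>
      (hc.of_norm_bounded (norm_mul_pow_le_of_abs_le (habs s hs))).hasSum)
  rw [← hsum.tsum_eq]
  congr 1 with n
  rw [intervalIntegral.integral_const_mul, integral_pow]
  ring

theorem tsum_div_mul_pow_succ_le_of_tsum_mul_pow_le {d : ℕ → ℝ} (ht : 0 ≤ t)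
    (hc : Summable fun n => ‖c n‖ * t ^ n) (hd : Summable fun n => ‖d n‖ * t ^ n)
    (hle : ∀ s ∈ Ioo 0 t, ∑' n, c n * s ^ n ≤ ∑' n, d n * s ^ n) :
    ∑' n, c n / (n + 1) * t ^ (n + 1) ≤ ∑' n, d n / (n + 1) * t ^ (n + 1) := by
  have hsub : Icc 0 t ⊆ Icc (-t) t := Icc_subset_Icc (by linarith) le_rfl
  rw [← integral_tsum_mul_pow ht hc, ← integral_tsum_mul_pow ht hd]
  exact intervalIntegral.integral_mono_on_of_le_Ioo ht
    (((continuousOn_tsum_mul_pow hc).mono hsub).intervalIntegrable_of_Icc ht)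
    (((continuousOn_tsum_mul_pow hd).mono hsub).intervalIntegrable_of_Icc ht) hle

end PowerSeriesIntegral

theorem hasSum_succ_mul_pow {s : ℝ} (hs : |s| < 1) :
    HasSum (fun n : ℕ => ((n : ℝ) + 1) * s ^ n) (1 / (1 - s) ^ 2) := by
  simpa using hasSum_choose_mul_geometric_of_norm_lt_one 1 (r := s) hs

theorem tsum_div_mul_pow_le_of_tsum_le_div_sq {c : ℕ → ℝ} {K t : ℝ} (ht0 : 0 < t)
    (ht1 : t < 1) (hc : Summable fun n => ‖c n‖ * t ^ n)
    (hle : ∀ s ∈ Ioo 0 t, ∑' n, c n * s ^ n ≤ K / (1 - s) ^ 2) :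
    ∑' n, c n / (n + 1) * t ^ n ≤ K / (1 - t) := by
  have habs : ∀ s ∈ Icc 0 t, |s| < 1 := fun s hs =>
    abs_lt.2 ⟨by linarith [hs.1], hs.2.trans_lt ht1⟩
  have hK : ∀ s ∈ Icc 0 t,
      HasSum (fun n : ℕ => K * ((n : ℝ) + 1) * s ^ n) (K / (1 - s) ^ 2) := fun s hs => by
    have h := (hasSum_succ_mul_pow (habs s hs)).mul_left K
    rw [mul_one_div] at h
    simpa only [mul_assoc] using h
  have hd : Summable fun n : ℕ => ‖K * ((n : ℝ) + 1)‖ * t ^ n := by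
    simpa only [norm_mul, Real.norm_of_nonneg (Nat.cast_add_one_pos _).le, mul_assoc] using
      (hasSum_succ_mul_pow (habs t ⟨ht0.le, le_rfl⟩)).summable.mul_left ‖K‖
  have h := tsum_div_mul_pow_succ_le_of_tsum_mul_pow_le (d := fun n => K * ((n : ℝ) + 1))
    ht0.le hc hd fun s hs => by
      rw [(hK s (Ioo_subset_Icc_self hs)).tsum_eq]
      exact hle s hs
  have hKd : ∀ n : ℕ, K * ((n : ℝ) + 1) / (n + 1) = K := fun n =>
    mul_div_cancel_right₀ K (Nat.cast_add_one_ne_zero n)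
  simp only [hKd, pow_succ, ← mul_assoc, tsum_mul_right, tsum_mul_left,
    tsum_geometric_of_lt_one ht0.le ht1] at h
  rw [div_eq_mul_inv]
  exact le_of_mul_le_mul_right h ht0

theorem tsum_div_mul_pow_succ_le_of_tsum_le_div {c : ℕ → ℝ} {K r : ℝ} (hr0 : 0 ≤ r)
    (hr1 : r < 1) (hc : Summable fun n => ‖c n‖ * r ^ n)
    (hle : ∀ s ∈ Ioo 0 r, ∑' n, c n * s ^ n ≤ K / (1 - s)) :
    ∑' n, c n / (n + 1) * r ^ (n + 1) ≤ K * Real.log (1 / (1 - r)) := by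
  have hK : ∀ s ∈ Icc 0 r, HasSum (fun n => K * s ^ n) (K / (1 - s)) := fun s hs => by
    simpa only [div_eq_mul_inv] using
      (hasSum_geometric_of_lt_one hs.1 (hs.2.trans_lt hr1)).mul_left K
  have h := tsum_div_mul_pow_succ_le_of_tsum_mul_pow_le (d := fun _ => K) hr0 hc
    ((summable_geometric_of_lt_one hr0 hr1).mul_left ‖K‖) fun s hs => by
      rw [(hK s (Ioo_subset_Icc_self hs)).tsum_eq]
      exact hle s hs
  refine h.trans_eq ?_
  rw [one_div, Real.log_inv, ← (Real.hasSum_pow_div_log_of_abs_lt_one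
    (abs_lt.2 ⟨by linarith, hr1⟩)).tsum_eq, ← tsum_mul_left]
  congr 1 with n
  ring

theorem tsum_div_sq_mul_pow_succ_le_mul_log {c : ℕ → ℝ} (hc : ∀ n, 0 ≤ c n) {K r : ℝ}
    (hr0 : 0 ≤ r) (hr1 : r < 1) (hsum : ∀ s ∈ Ico (0 : ℝ) 1, Summable fun n => c n * s ^ n)
    (hle : ∀ s ∈ Ioo (0 : ℝ) 1, ∑' n, c n * s ^ n ≤ K / (1 - s) ^ 2) :
    ∑' n, c n / (n + 1) ^ 2 * r ^ (n + 1) ≤ K * Real.log (1 / (1 - r)) := by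
  have hcs : ∀ s ∈ Ico (0 : ℝ) 1, Summable fun n => ‖c n‖ * s ^ n := fun s hs => by
    simpa only [Real.norm_of_nonneg (hc _)] using hsum s hs
  have hc' : Summable fun n => ‖c n / (n + 1)‖ * r ^ n :=
    (hcs r ⟨hr0, hr1⟩).of_nonneg_of_le (fun n => by positivity) fun n => by
      rw [norm_div, Real.norm_of_nonneg (Nat.cast_add_one_pos n).le]
      gcongr
      exact div_le_self (norm_nonneg _) (le_add_of_nonneg_left n.cast_nonneg)
  calc ∑' n : ℕ, c n / (n + 1) ^ 2 * r ^ (n + 1)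
      = ∑' n : ℕ, c n / (n + 1) / (n + 1) * r ^ (n + 1) := by
        congr! 3 with n
        rw [div_div, sq]
    _ ≤ K * Real.log (1 / (1 - r)) :=
        tsum_div_mul_pow_succ_le_of_tsum_le_div hr0 hr1 hc' fun t ht =>
          tsum_div_mul_pow_le_of_tsum_le_div_sq ht.1 (ht.2.trans hr1)
            (hcs t ⟨ht.1.le, ht.2.trans hr1⟩) fun s hs =>
              hle s ⟨hs.1, hs.2.trans (ht.2.trans hr1)⟩

section FourierSeries

variable {T : ℝ} [Fact (0 < T)] {c : ℕ → ℂ} {F : AddCircle T → ℂ}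

theorem fourierCoeff_eq_of_hasSum (hc : Summable fun m => ‖c m‖)
    (hF : ∀ x, HasSum (fun m => c m • fourier (m : ℤ) x) (F x)) (k : ℕ) :
    fourierCoeff F k = c k := by
  have hint : ∀ m : ℕ, Integrable
      (fun x : AddCircle T => fourier (-(k : ℤ)) x • c m • fourier (m : ℤ) x) haarAddCircle :=
    fun m => (((map_continuous (fourier (T := T) m)).const_smul (c m))
      |>.integrable_of_hasCompactSupport (.of_compactSpace _)).fourier_smul _
  have hnorm : ∀ m : ℕ,
      ∫ x : AddCircle T, ‖fourier (-(k : ℤ)) x • c m • fourier (m : ℤ) x‖ ∂haarAddCircle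
        = ‖c m‖ := fun m => by
    simp [Circle.norm_coe]
  calc fourierCoeff F k
      = ∫ x : AddCircle T, ∑' m, fourier (-(k : ℤ)) x • c m • fourier (m : ℤ) x
          ∂haarAddCircle := by
        simp only [fourierCoeff, ((hF _).const_smul _).tsum_eq]
    _ = ∑' m, c m • fourierCoeff (fourier (m : ℤ) : AddCircle T → ℂ) k := by
        rw [← integral_tsum_of_summable_integral_norm hint (by simpa only [hnorm] using hc)]
        congr 1 with m
        rw [← fourierCoeff.const_smul]
        simp only [fourierCoeff, Pi.smul_apply, smul_comm (fourier _ _)]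
    _ = c k := by
        simp [fourierCoeff_fourier, Pi.single_apply]

theorem tsum_sq_norm_le_of_hasSum_fourier (hc : Summable fun m => ‖c m‖)
    (hF : ∀ x, HasSum (fun m => c m • fourier (m : ℤ) x) (F x)) {C : ℝ}
    (hC : ∀ x, ‖F x‖ ≤ C) :
    Summable (fun m => ‖c m‖ ^ 2) ∧ ∑' m, ‖c m‖ ^ 2 ≤ C ^ 2 := by
  obtain ⟨G, hG⟩ : Summable fun m : ℕ => c m • fourier (T := T) m :=
    .of_norm (by simpa only [norm_smul, fourier_norm, mul_one] using hc)
  have hGF : ⇑G = F := funext fun x => ((ContinuousMap.evalCLM ℂ x).hasSum hG).unique (hF x)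
  have hpar := hasSum_sq_fourierCoeff (ContinuousMap.toLp (E := ℂ) 2 haarAddCircle ℂ G)
  simp only [fourierCoeff_toLp, hGF] at hpar
  have hcoeff : ∀ m : ℕ, ‖fourierCoeff F m‖ ^ 2 = ‖c m‖ ^ 2 := fun m => by
    rw [fourierCoeff_eq_of_hasSum hc hF]
  have hsum : Summable fun m : ℕ => ‖c m‖ ^ 2 := by
    simpa only [Function.comp_def, hcoeff] using
      hpar.summable.comp_injective Nat.cast_injective
  refine ⟨hsum, ?_⟩
  have hbound : ∀ᵐ x ∂haarAddCircle,
      ‖‖ContinuousMap.toLp (E := ℂ) 2 (@haarAddCircle T _) ℂ G x‖ ^ 2‖ ≤ C ^ 2 := by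
    filter_upwards [ContinuousMap.coeFn_toLp (p := 2) (𝕜 := ℂ) (μ := haarAddCircle) G]
      with x hx
    rw [hx, hGF, norm_pow, norm_norm]
    exact pow_le_pow_left₀ (norm_nonneg _) (hC x) 2
  calc ∑' m, ‖c m‖ ^ 2
      = ∑' m : ℕ, ‖fourierCoeff F m‖ ^ 2 := by simp only [hcoeff]
    _ ≤ ∑' i : ℤ, ‖fourierCoeff F i‖ ^ 2 :=
        tsum_comp_le_tsum_of_inj hpar.summable (fun _ => sq_nonneg _) Nat.cast_injective
    _ ≤ C ^ 2 := by
        rw [hpar.tsum_eq]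
        refine (le_abs_self _).trans ?_
        simpa using norm_integral_le_of_norm_le_const hbound

end FourierSeries

theorem tsum_sq_norm_mul_pow_le_of_norm_le_on_circle {b : ℕ → ℂ} {g : ℂ → ℂ} {ρ C : ℝ}
    (hρ : 0 ≤ ρ) (hb : Summable fun n => ‖b n‖ * ρ ^ n)
    (hg : ∀ z : ℂ, ‖z‖ = ρ → HasSum (fun n => b n * z ^ n) (g z))
    (hC : ∀ z : ℂ, ‖z‖ = ρ → ‖g z‖ ≤ C) :
    Summable (fun n => ‖b n‖ ^ 2 * (ρ ^ 2) ^ n) ∧ ∑' n, ‖b n‖ ^ 2 * (ρ ^ 2) ^ n ≤ C ^ 2 := by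
  -- parametrize the circle `‖z‖ = ρ` by `x ↦ ρ * toCircle x` on `ℝ ⧸ ℤ`
  have : Fact ((0 : ℝ) < 1) := ⟨one_pos⟩
  have hz : ∀ x : AddCircle (1 : ℝ), ‖(ρ : ℂ) * toCircle x‖ = ρ := fun x => by
    rw [norm_mul, Circle.norm_coe, mul_one, Complex.norm_real, Real.norm_of_nonneg hρ]
  have hnorm : ∀ n, ‖b n * (ρ : ℂ) ^ n‖ = ‖b n‖ * ρ ^ n := fun n => by
    rw [norm_mul, norm_pow, Complex.norm_real, Real.norm_of_nonneg hρ]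
  have hsq : ∀ n, ‖b n * (ρ : ℂ) ^ n‖ ^ 2 = ‖b n‖ ^ 2 * (ρ ^ 2) ^ n := fun n => by
    rw [hnorm, mul_pow, ← pow_mul, ← pow_mul, mul_comm n]
  simpa only [hsq] using tsum_sq_norm_le_of_hasSum_fourier (T := 1)
    (c := fun n => b n * (ρ : ℂ) ^ n) (F := fun x => g (ρ * toCircle x))
    (by simpa only [hnorm] using hb)
    (fun x => by
      simpa [fourier_apply, toCircle_nsmul, mul_pow, mul_assoc] using hg _ (hz x))
    fun x => hC _ (hz x)

theorem tsum_sq_norm_mul_pow_le_of_growth_bound {b : ℕ → ℂ} {g : ℂ → ℂ}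
    (hg : ∀ z ∈ ball (0 : ℂ) 1, HasSum (fun n => b n * z ^ n) (g z)) {M : ℝ}
    (hM : ∀ z ∈ ball (0 : ℂ) 1, (1 - ‖z‖ ^ 2) * ‖g z‖ ≤ M) {s : ℝ} (hs0 : 0 ≤ s)
    (hs1 : s < 1) :
    Summable (fun n => ‖b n‖ ^ 2 * s ^ n) ∧ ∑' n, ‖b n‖ ^ 2 * s ^ n ≤ M ^ 2 / (1 - s) ^ 2 := by
  obtain ⟨ρ, hρ0, rfl⟩ : ∃ ρ, 0 ≤ ρ ∧ ρ ^ 2 = s :=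
    ⟨√s, Real.sqrt_nonneg s, Real.sq_sqrt hs0⟩
  have hρ1 : ρ < 1 := (pow_lt_one_iff_of_nonneg hρ0 two_ne_zero).1 hs1
  have hmem : ∀ z : ℂ, ‖z‖ = ρ → z ∈ ball (0 : ℂ) 1 := fun z hz => by simpa [hz] using hρ1
  have hb : Summable fun n => ‖b n‖ * ρ ^ n := by
    have hR := le_radius_ofScalars_of_summable (R := 1) fun z hz =>
      (hg z (by simpa using hz)).summable
    simpa [ofScalars_norm, hρ0] using
      (ofScalars ℂ b).summable_norm_mul_pow (r := ρ.toNNReal)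
        (lt_of_lt_of_le (ENNReal.coe_lt_coe.2 (Real.toNNReal_lt_one.2 hρ1)) hR)
  rw [← div_pow]
  refine tsum_sq_norm_mul_pow_le_of_norm_le_on_circle hρ0 hb (fun z hz => hg z (hmem z hz))
    fun z hz => ?_
  rw [le_div_iff₀ (by linarith), mul_comm, ← hz]
  exact hM z (hmem z hz)

theorem bohr_stmt_16_general (a : ℕ → ℂ) (f : ℂ → ℂ)
    (ha : ∀ z ∈ ball (0:ℂ) 1, HasSum (fun n : ℕ => a n * z ^ n) (f z))
    (hbloch : ∀ z ∈ ball (0:ℂ) 1,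
      ‖f 0‖ + (1 - (‖z‖)^2) * ‖deriv f z‖ ≤ 1)
    (r : ℝ) (hr0 : 0 ≤ r) (hr1 : r < 1) :
    ∑' n : ℕ, (‖a (n + 1)‖)^2 * r ^ (n + 1) ≤
      (1 - ‖a 0‖)^2 * Real.log (1 / (1 - r)) := by
  have hf := hasFPowerSeriesOnBall_ofScalars_of_hasSum one_pos ha
  have ha0 : f 0 = a 0 := by simpa [ofScalars_apply_eq] using (hf.coeff_zero fun _ => 0).symm
  have hderiv : ∀ z ∈ ball (0 : ℂ) 1,
      HasSum (fun n => ((n + 1) * a (n + 1)) * z ^ n) (deriv f z) := fun z hz => by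
    simpa [coeff_ofScalars, mul_comm] using
      hf.hasSum_deriv (y := z) (by rw [Metric.eball_coe]; simpa using hz)
  have hgrowth := fun s (hs : s ∈ Ico (0 : ℝ) 1) =>
    tsum_sq_norm_mul_pow_le_of_growth_bound hderiv (M := 1 - ‖a 0‖)
      (fun z hz => by linarith [ha0 ▸ hbloch z hz]) hs.1 hs.2
  calc ∑' n : ℕ, ‖a (n + 1)‖ ^ 2 * r ^ (n + 1)
      = ∑' n : ℕ, ‖((n + 1) * a (n + 1) : ℂ)‖ ^ 2 / (n + 1) ^ 2 * r ^ (n + 1) := by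
        congr 1 with n
        have hn : ‖(n : ℂ) + 1‖ = n + 1 := by exact_mod_cast Complex.norm_natCast (n + 1)
        rw [norm_mul, mul_pow, hn]
        field_simp
    _ ≤ (1 - ‖a 0‖) ^ 2 * Real.log (1 / (1 - r)) :=
        tsum_div_sq_mul_pow_succ_le_mul_log (fun n => sq_nonneg _) hr0 hr1
          (fun s hs => (hgrowth s hs).1) fun s hs => (hgrowth s (Ioo_subset_Ico_self hs)).2

theorem bohr_stmt_16 (a : ℕ → ℂ) (f : ℂ → ℂ)
    (hf : AnalyticOn ℂ f (ball (0:ℂ) 1))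
    (ha : ∀ z ∈ ball (0:ℂ) 1, HasSum (fun n : ℕ => a n * z ^ n) (f z))
    (hbloch : ∀ z ∈ ball (0:ℂ) 1,
      ‖f 0‖ + (1 - (‖z‖)^2) * ‖deriv f z‖ ≤ 1)
    (r : ℝ) (hr0 : 0 ≤ r) (hr1 : r < 1) :
    ∑' n : ℕ, (‖a (n + 1)‖)^2 * r ^ (n + 1) ≤
      (1 - ‖a 0‖)^2 * Real.log (1 / (1 - r)) :=
  bohr_stmt_16_general a f ha hbloch r hr0 hr1
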